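/- arXiv:1905.08471 — 2 statements merged into one kernel-verified Lean document; each statement's English description precedes it below -/
import Mathlib

section
/- For any integer K ≥ 2, every achievable memory rate pair (M, R) for the (K,K) cache network satisfies K·M + K(K-1)·R ≥ K² - 1, assuming files are independent and uniformly distributed with entropy normalized to 1 each, and using only: (a) submodularity of entropy, (b) the decodability identities H(Z_k, X_d) = H(W_{d_k}, Z_k, X_d), and (c) H(W_{[K]}, Z_k, X_d) = H(W_{[K]}). -/
open Finset

/-- For any K ≥ 2, every achievable memory rate pair (M, R) of the (K,K) cache network
satisfies K·M + K(K-1)·R ≥ K² - 1, for any entropy-like function H (submodular, monotone,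
vanishing on ∅) on the ground set of K files (`Sum.inl`), K caches (`Sum.inr ∘ Sum.inl`)
and K broadcasts X^i for the cyclic demands d^i (`Sum.inr ∘ Sum.inr`), where the files are
independent with unit entropy, caches and broadcasts are functions of the files,
H(Z_k) ≤ M, H(X^{[K]\{i}}) ≤ (K-1)R, and the decodability identities hold:
(Z_{K+1-i}, X^{[K]\{i}}) determines W_1,…,W_{K-1} and (Z_{K+1-i}, X^i) determines W_K. -/
theorem lower_bound_KK (K : ℕ) (hK : 2 ≤ K) (M R : ℝ)
    (H : Finset (Fin K ⊕ (Fin K ⊕ Fin K)) → ℝ)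
    (hempty : H ∅ = 0)
    (hmono : ∀ A B, A ⊆ B → H A ≤ H B)
    (hsub : ∀ A B, H A + H B ≥ H (A ∪ B) + H (A ∩ B))
    -- files are independent with unit entropy each
    (hfiles : ∀ s : Finset (Fin K), H (s.image Sum.inl) = s.card)
    -- caches and broadcasts are functions of the files
    (hfun : ∀ A, H (A ∪ (Finset.univ.image Sum.inl)) = H (Finset.univ.image Sum.inl))
    -- cache size constraint
    (hZ : ∀ k : Fin K, H {Sum.inr (Sum.inl k)} ≤ M)
    -- broadcast size constraint on the unions X^{[K]\{i}} used in the proof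
    (hX : ∀ i : Fin K,
      H ((Finset.univ.erase i).image (fun j => Sum.inr (Sum.inr j))) ≤ ((K : ℝ) - 1) * R)
    -- user K+1-i together with X^{[K]\{i}} determines the first K-1 files
    (hdecAll : ∀ i : Fin K,
      H ((insert (Sum.inr (Sum.inl i.rev))
            ((Finset.univ.erase i).image (fun j => Sum.inr (Sum.inr j))))
          ∪ ((Finset.univ.filter (fun n : Fin K => (n : ℕ) < K - 1)).image Sum.inl))
      = H (insert (Sum.inr (Sum.inl i.rev))
            ((Finset.univ.erase i).image (fun j => Sum.inr (Sum.inr j)))))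
    -- user K+1-i together with X^i determines the file W_K
    (hdecK : ∀ i : Fin K,
      H (insert (Sum.inl (⟨K - 1, by omega⟩ : Fin K))
          ({Sum.inr (Sum.inl i.rev), Sum.inr (Sum.inr i)} : Finset _))
      = H ({Sum.inr (Sum.inl i.rev), Sum.inr (Sum.inr i)} : Finset _)) :
    (K : ℝ) * M + (K : ℝ) * ((K : ℝ) - 1) * R ≥ (K : ℝ)^2 - 1 := by
  classical
  -- abbreviations (written out each time to match hypothesis syntax)
  -- Wf = first K-1 files, X j = broadcast j, B i = (Z_{rev i}, X^{\i}) ∪ Wf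
  have hKR : (1:ℝ) ≤ (K:ℝ) := by exact_mod_cast Nat.one_le_of_lt hK
  have hFallH : H (Finset.univ.image (Sum.inl : Fin K → Fin K ⊕ (Fin K ⊕ Fin K))) = (K:ℝ) := by
    rw [hfiles]; simp
  -- key cancellation lemma
  have key : ∀ (w : Fin K ⊕ (Fin K ⊕ Fin K)) (P S : Finset (Fin K ⊕ (Fin K ⊕ Fin K))),
      H (insert w P) = H P → P ⊆ S → H (insert w S) ≤ H S := by
    intro w P S hdec hPS
    have h2 := hsub S (insert w P)
    have h1 : S ∪ insert w P = insert w S := by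
      rw [Finset.union_insert, Finset.union_eq_left.mpr hPS]
    rw [h1, hdec] at h2
    have h3 : H P ≤ H (S ∩ insert w P) :=
      hmono _ _ (Finset.subset_inter hPS (Finset.subset_insert _ _))
    linarith
  -- full entropy lemma: S containing Z_{rev i}, X_i and all of Wf has entropy ≥ K
  have hfull : ∀ (i : Fin K) (S : Finset (Fin K ⊕ (Fin K ⊕ Fin K))),
      Sum.inr (Sum.inl i.rev) ∈ S → Sum.inr (Sum.inr i) ∈ S →
      ((Finset.univ.filter (fun n : Fin K => (n : ℕ) < K - 1)).image Sum.inl) ⊆ S →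
      (K : ℝ) ≤ H S := by
    intro i S hz hx hw
    have hPS : ({Sum.inr (Sum.inl i.rev), Sum.inr (Sum.inr i)} :
        Finset (Fin K ⊕ (Fin K ⊕ Fin K))) ⊆ S := by
      intro x hxm
      simp only [Finset.mem_insert, Finset.mem_singleton] at hxm
      rcases hxm with rfl | rfl <;> assumption
    have h4 := key _ _ S (hdecK i) hPS
    have h5 : Finset.univ.image (Sum.inl : Fin K → Fin K ⊕ (Fin K ⊕ Fin K)) ⊆
        insert (Sum.inl (⟨K - 1, by omega⟩ : Fin K)) S := by
      intro x hxm
      simp only [Finset.mem_image, Finset.mem_univ, true_and] at hxm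
      obtain ⟨n, rfl⟩ := hxm
      by_cases hn : (n : ℕ) < K - 1
      · refine Finset.mem_insert_of_mem (hw ?_)
        simp only [Finset.mem_image, Finset.mem_filter, Finset.mem_univ, true_and]
        exact ⟨n, hn, rfl⟩
      · have hn2 : n = ⟨K - 1, by omega⟩ := by
          apply Fin.ext; have := n.isLt; simp only []; omega
        rw [hn2]; exact Finset.mem_insert_self _ _
    calc (K:ℝ) = H (Finset.univ.image (Sum.inl : Fin K → Fin K ⊕ (Fin K ⊕ Fin K))) :=
          hFallH.symm
      _ ≤ H (insert (Sum.inl (⟨K - 1, by omega⟩ : Fin K)) S) := hmono _ _ h5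
      _ ≤ H S := h4
  -- the step of the chain
  have hstep : ∀ (i : Fin K) (s : Finset (Fin K)), i ∉ s →
      H (((Finset.univ.filter (fun n : Fin K => (n : ℕ) < K - 1)).image Sum.inl)
          ∪ (Finset.univ \ s).image (fun j => Sum.inr (Sum.inr j))) +
        H ((insert (Sum.inr (Sum.inl i.rev))
            ((Finset.univ.erase i).image (fun j => Sum.inr (Sum.inr j))))
          ∪ ((Finset.univ.filter (fun n : Fin K => (n : ℕ) < K - 1)).image Sum.inl))
      ≥ (K : ℝ) +
        H (((Finset.univ.filter (fun n : Fin K => (n : ℕ) < K - 1)).image Sum.inl)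
          ∪ (Finset.univ \ insert i s).image (fun j => Sum.inr (Sum.inr j))) := by
    intro i s his
    set A := ((Finset.univ.filter (fun n : Fin K => (n : ℕ) < K - 1)).image Sum.inl)
        ∪ (Finset.univ \ s).image
          (fun j => (Sum.inr (Sum.inr j) : Fin K ⊕ (Fin K ⊕ Fin K))) with hA
    set B := (insert (Sum.inr (Sum.inl i.rev))
          ((Finset.univ.erase i).image
            (fun j => (Sum.inr (Sum.inr j) : Fin K ⊕ (Fin K ⊕ Fin K)))))
        ∪ ((Finset.univ.filter (fun n : Fin K => (n : ℕ) < K - 1)).image Sum.inl) with hB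
    have h2 := hsub A B
    have hU : (K:ℝ) ≤ H (A ∪ B) := by
      apply hfull i
      · exact Finset.mem_union_right _ (Finset.mem_union_left _ (Finset.mem_insert_self _ _))
      · refine Finset.mem_union_left _ (Finset.mem_union_right _ ?_)
        exact Finset.mem_image_of_mem _ (by simp [his])
      · exact (Finset.subset_union_left).trans Finset.subset_union_left
    have hI : H (((Finset.univ.filter (fun n : Fin K => (n : ℕ) < K - 1)).image Sum.inl)
        ∪ (Finset.univ \ insert i s).image (fun j => Sum.inr (Sum.inr j))) ≤ H (A ∩ B) := by
      apply hmono
      intro x hxm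
      rcases Finset.mem_union.mp hxm with hxw | hximg
      · exact Finset.mem_inter.mpr
          ⟨Finset.mem_union_left _ hxw, Finset.mem_union_right _ hxw⟩
      · obtain ⟨j, hj, rfl⟩ := Finset.mem_image.mp hximg
        rw [Finset.mem_sdiff] at hj
        have hji : j ≠ i := fun h => hj.2 (h ▸ Finset.mem_insert_self i s)
        have hjs : j ∉ s := fun h => hj.2 (Finset.mem_insert_of_mem h)
        refine Finset.mem_inter.mpr ⟨?_, ?_⟩
        · exact Finset.mem_union_right _
            (Finset.mem_image_of_mem _ (by simp [hjs]))
        · exact Finset.mem_union_left _ (Finset.mem_insert_of_mem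
            (Finset.mem_image_of_mem _ (by simp [hji])))
    linarith
  -- the chain, by induction over the set of processed indices
  have hchain : ∀ s : Finset (Fin K),
      H (((Finset.univ.filter (fun n : Fin K => (n : ℕ) < K - 1)).image Sum.inl)
          ∪ (Finset.univ \ (∅ : Finset (Fin K))).image (fun j => Sum.inr (Sum.inr j))) +
        ∑ i ∈ s, H ((insert (Sum.inr (Sum.inl i.rev))
            ((Finset.univ.erase i).image (fun j => Sum.inr (Sum.inr j))))
          ∪ ((Finset.univ.filter (fun n : Fin K => (n : ℕ) < K - 1)).image Sum.inl))
      ≥ (K : ℝ) * s.card +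
        H (((Finset.univ.filter (fun n : Fin K => (n : ℕ) < K - 1)).image Sum.inl)
          ∪ (Finset.univ \ s).image (fun j => Sum.inr (Sum.inr j))) := by
    intro s
    induction s using Finset.induction_on with
    | empty => simp
    | @insert a s ha ih =>
      rw [Finset.sum_insert ha, Finset.card_insert_of_notMem ha]
      have := hstep a s ha
      push_cast
      linarith
  -- per-term upper bound
  have hterm : ∀ i : Fin K,
      H ((insert (Sum.inr (Sum.inl i.rev))
            ((Finset.univ.erase i).image (fun j => Sum.inr (Sum.inr j))))
          ∪ ((Finset.univ.filter (fun n : Fin K => (n : ℕ) < K - 1)).image Sum.inl))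
        ≤ M + ((K:ℝ) - 1) * R := by
    intro i
    rw [hdecAll i]
    have h2 := hsub {Sum.inr (Sum.inl i.rev)}
      ((Finset.univ.erase i).image
        (fun j => (Sum.inr (Sum.inr j) : Fin K ⊕ (Fin K ⊕ Fin K))))
    have h3 : ({Sum.inr (Sum.inl i.rev)} : Finset (Fin K ⊕ (Fin K ⊕ Fin K)))
        ∪ (Finset.univ.erase i).image (fun j => Sum.inr (Sum.inr j))
        = insert (Sum.inr (Sum.inl i.rev))
            ((Finset.univ.erase i).image (fun j => Sum.inr (Sum.inr j))) := by
      rw [Finset.insert_eq]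
    have h4 : (0:ℝ) ≤ H (({Sum.inr (Sum.inl i.rev)} : Finset (Fin K ⊕ (Fin K ⊕ Fin K)))
        ∩ (Finset.univ.erase i).image (fun j => Sum.inr (Sum.inr j))) := by
      rw [← hempty]; exact hmono _ _ (Finset.empty_subset _)
    have h5 := hZ i.rev
    have h6 := hX i
    rw [h3] at h2
    linarith
  -- entropy of E ∅ is at most K
  have hEempty : H (((Finset.univ.filter (fun n : Fin K => (n : ℕ) < K - 1)).image Sum.inl)
      ∪ (Finset.univ \ (∅ : Finset (Fin K))).image (fun j => Sum.inr (Sum.inr j)))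
      ≤ (K:ℝ) := by
    have h1 := hfun (((Finset.univ.filter (fun n : Fin K => (n : ℕ) < K - 1)).image Sum.inl)
      ∪ (Finset.univ \ (∅ : Finset (Fin K))).image (fun j => Sum.inr (Sum.inr j)))
    have h2 := hmono _ _ (Finset.subset_union_left :
      (((Finset.univ.filter (fun n : Fin K => (n : ℕ) < K - 1)).image Sum.inl)
        ∪ (Finset.univ \ (∅ : Finset (Fin K))).image
          (fun j => (Sum.inr (Sum.inr j) : Fin K ⊕ (Fin K ⊕ Fin K)))) ⊆
      _ ∪ (Finset.univ.image Sum.inl))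
    rw [h1, hFallH] at h2
    exact h2
  -- entropy of E univ is K - 1
  have hWfcard : ((Finset.univ.filter (fun n : Fin K => (n : ℕ) < K - 1)) :
      Finset (Fin K)).card = K - 1 := by
    have heq : (Finset.univ.filter (fun n : Fin K => (n : ℕ) < K - 1))
        = Finset.univ.erase (⟨K - 1, by omega⟩ : Fin K) := by
      ext n
      simp only [Finset.mem_filter, Finset.mem_univ, true_and, Finset.mem_erase, Fin.ext_iff]
      have h1 := n.isLt
      have h2 : ((⟨K - 1, by omega⟩ : Fin K) : ℕ) = K - 1 := rfl
      simp only [ne_eq, and_true, Fin.ext_iff, h2]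
      omega
    rw [heq, Finset.card_erase_of_mem (Finset.mem_univ _), Finset.card_univ, Fintype.card_fin]
  have hEuniv : H (((Finset.univ.filter (fun n : Fin K => (n : ℕ) < K - 1)).image Sum.inl)
      ∪ (Finset.univ \ (Finset.univ : Finset (Fin K))).image (fun j => Sum.inr (Sum.inr j)))
      = (K:ℝ) - 1 := by
    rw [Finset.sdiff_self, Finset.image_empty, Finset.union_empty, hfiles, hWfcard]
    have : (1:ℕ) ≤ K := by omega
    push_cast [this]
    ring
  -- sum upper bound
  have hsum_le : ∑ i : Fin K, H ((insert (Sum.inr (Sum.inl i.rev))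
        ((Finset.univ.erase i).image (fun j => Sum.inr (Sum.inr j))))
        ∪ ((Finset.univ.filter (fun n : Fin K => (n : ℕ) < K - 1)).image Sum.inl))
      ≤ (K:ℝ) * (M + ((K:ℝ) - 1) * R) := by
    calc ∑ i : Fin K, H ((insert (Sum.inr (Sum.inl i.rev))
          ((Finset.univ.erase i).image (fun j => Sum.inr (Sum.inr j))))
          ∪ ((Finset.univ.filter (fun n : Fin K => (n : ℕ) < K - 1)).image Sum.inl))
        ≤ ∑ _i : Fin K, (M + ((K:ℝ) - 1) * R) :=
          Finset.sum_le_sum (fun i _ => hterm i)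
      _ = (K:ℝ) * (M + ((K:ℝ) - 1) * R) := by
          rw [Finset.sum_const, Finset.card_univ, Fintype.card_fin, nsmul_eq_mul]
  have hchain_univ := hchain Finset.univ
  rw [Finset.card_univ, Fintype.card_fin, hEuniv] at hchain_univ
  nlinarith [hchain_univ, hsum_le, hEempty]
end

section
/- For the (2,2) cache network (K = 2 case of Theorem 2), every achievable memory rate pair with two independent unit-entropy files satisfies 2M + 2R ≥ 3. -/
open Finset

/-- The K = 2 case of Theorem 2: for the (2,2) cache network with two independent
unit-entropy files (`Sum.inl`), two caches (`Sum.inr ∘ Sum.inl`) of entropy at most M, and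
for each of the two distinct-file demands a broadcast (`Sum.inr ∘ Sum.inr`) of entropy at
most R (broadcast 0 for the demand (W₁,W₂) and broadcast 1 for (W₂,W₁)), with decodability
and with caches and broadcasts functions of the files, 2M + 2R ≥ 3. -/
theorem lower_bound_22 (M R : ℝ)
    (H : Finset (Fin 2 ⊕ (Fin 2 ⊕ Fin 2)) → ℝ)
    (hempty : H ∅ = 0)
    (hmono : ∀ A B, A ⊆ B → H A ≤ H B)
    (hsub : ∀ A B, H A + H B ≥ H (A ∪ B) + H (A ∩ B))
    -- the two files are independent with unit entropy
    (hfiles : ∀ s : Finset (Fin 2), H (s.image Sum.inl) = s.card)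
    -- caches and broadcasts are functions of the files
    (hfun : ∀ A, H (A ∪ (Finset.univ.image Sum.inl)) = H (Finset.univ.image Sum.inl))
    (hZ : ∀ k : Fin 2, H {Sum.inr (Sum.inl k)} ≤ M)
    (hX : ∀ i : Fin 2, H {Sum.inr (Sum.inr i)} ≤ R)
    -- demand 0 = (W₁, W₂): user k decodes W_k;  demand 1 = (W₂, W₁): user k decodes W_{k.rev}
    (hdec0 : ∀ k : Fin 2,
      H (insert (Sum.inl k) ({Sum.inr (Sum.inl k), Sum.inr (Sum.inr 0)} : Finset _))
      = H ({Sum.inr (Sum.inl k), Sum.inr (Sum.inr 0)} : Finset _))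
    (hdec1 : ∀ k : Fin 2,
      H (insert (Sum.inl k.rev) ({Sum.inr (Sum.inl k), Sum.inr (Sum.inr 1)} : Finset _))
      = H ({Sum.inr (Sum.inl k), Sum.inr (Sum.inr 1)} : Finset _)) :
    2 * M + 2 * R ≥ 3 := by
  set w0 : Fin 2 ⊕ (Fin 2 ⊕ Fin 2) := Sum.inl 0 with hw0def
  set w1 : Fin 2 ⊕ (Fin 2 ⊕ Fin 2) := Sum.inl 1 with hw1def
  set z0 : Fin 2 ⊕ (Fin 2 ⊕ Fin 2) := Sum.inr (Sum.inl 0) with hz0def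
  set z1 : Fin 2 ⊕ (Fin 2 ⊕ Fin 2) := Sum.inr (Sum.inl 1) with hz1def
  set x0 : Fin 2 ⊕ (Fin 2 ⊕ Fin 2) := Sum.inr (Sum.inr 0) with hx0def
  set x1 : Fin 2 ⊕ (Fin 2 ⊕ Fin 2) := Sum.inr (Sum.inr 1) with hx1def
  -- entropy of single file
  have hW0 : H {w0} = 1 := by
    have := hfiles {0}
    have he : ({0} : Finset (Fin 2)).image Sum.inl = {w0} := by decide
    rw [he] at this
    simpa using this
  have hWW : H {w0, w1} = 2 := by
    have := hfiles Finset.univ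
    have he : (Finset.univ : Finset (Fin 2)).image Sum.inl = {w0, w1} := by decide
    rw [he] at this
    simpa using this
  -- subadditivity: pairs
  have h1 : H {z0, x0} ≤ M + R := by
    have hs := hsub {z0} {x0}
    have hu : ({z0} : Finset _) ∪ {x0} = {z0, x0} := by decide
    have hi : ({z0} : Finset _) ∩ {x0} = ∅ := by decide
    rw [hu, hi, hempty] at hs
    have := hZ 0
    have := hX 0
    simp only [← hz0def, ← hx0def] at *
    linarith
  have h2 : H {z1, x1} ≤ M + R := by
    have hs := hsub {z1} {x1}
    have hu : ({z1} : Finset _) ∪ {x1} = {z1, x1} := by decide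
    have hi : ({z1} : Finset _) ∩ {x1} = ∅ := by decide
    rw [hu, hi, hempty] at hs
    have := hZ 1
    have := hX 1
    simp only [← hz1def, ← hx1def] at *
    linarith
  -- decoding facts
  have hd1 : H {w0, z0, x0} = H {z0, x0} := by
    have := hdec0 0
    simpa [← hw0def, ← hz0def, ← hx0def] using this
  have hd2 : H {w0, z1, x1} = H {z1, x1} := by
    have := hdec1 1
    have hr : ((1 : Fin 2)).rev = 0 := by decide
    rw [hr] at this
    simpa [← hw0def, ← hz1def, ← hx1def] using this
  have hd3 : H {w1, z1, x0} = H {z1, x0} := by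
    have := hdec0 1
    simpa [← hw1def, ← hz1def, ← hx0def] using this
  -- submodularity on the two decoded sets
  have hs1 := hsub {w0, z0, x0} {w0, z1, x1}
  have hu1 : ({w0, z0, x0} : Finset _) ∪ {w0, z1, x1} = {w0, z0, x0, z1, x1} := by decide
  have hi1 : ({w0, z0, x0} : Finset _) ∩ {w0, z1, x1} = {w0} := by decide
  rw [hu1, hi1, hW0] at hs1
  -- bound H {w0, z0, x0, z1, x1} from below by 2
  have hs2 := hsub {w0, z0, x0, z1, x1} {w1, z1, x0}
  have hu2 : ({w0, z0, x0, z1, x1} : Finset _) ∪ {w1, z1, x0}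
      = {w1, w0, z0, x0, z1, x1} := by decide
  have hi2 : ({w0, z0, x0, z1, x1} : Finset _) ∩ {w1, z1, x0} = {z1, x0} := by decide
  rw [hu2, hi2, hd3] at hs2
  have hm : H {w0, w1} ≤ H {w1, w0, z0, x0, z1, x1} := by
    apply hmono
    decide
  linarith
end
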